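/- Let S be a bent set in B_n (every element of S is bent and the sum of any two distinct elements of S is bent), and let a_0, a_1 ∈ S with a_0 ≠ a_1. Then f = a_0 + 2a_1 : V_n → Z_4 is gbent. -/

import Mathlib

open Finset BigOperators

noncomputable def zeta (q : ℕ) : ℂ := Complex.exp (2 * Real.pi * Complex.I / q)

def dotp {n : ℕ} (u x : Fin n → ZMod 2) : ZMod 2 := ∑ i, u i * x i

noncomputable def chr {n : ℕ} (u x : Fin n → ZMod 2) : ℂ := (-1 : ℂ) ^ (dotp u x).val

noncomputable def WHT {n q : ℕ} (f : (Fin n → ZMod 2) → ZMod q) (u : Fin n → ZMod 2) : ℂ :=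
  ∑ x, zeta q ^ (f x).val * chr u x

noncomputable def Amat {n q : ℕ} (f : (Fin n → ZMod 2) → ZMod q) :
    Matrix (Fin n → ZMod 2) (Fin n → ZMod 2) ℂ :=
  fun u v => zeta q ^ (f (u + v)).val

/-- A Boolean function is bent if its Walsh–Hadamard spectrum is flat. -/
def IsBent {n : ℕ} (g : (Fin n → ZMod 2) → ZMod 2) : Prop :=
  ∀ u : Fin n → ZMod 2, ‖∑ x, (-1 : ℂ) ^ (g x + dotp u x).val‖ = Real.sqrt (2 ^ n)

/-!
For bits `a, b` one has `i^(a + 2b) = (1+i)/2 · (-1)^b + (1-i)/2 · (-1)^(a+b)`, so the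
generalized Walsh transform of `f = a₀ + 2a₁` is `(1+i)/2 · W_{a₁} + (1-i)/2 · W_{a₀+a₁}`.
Both transforms are real with absolute value `2^(n/2)`, and
`|(1+i)/2 · r + (1-i)/2 · s|² = (r² + s²)/2`.
-/

open Complex

theorem ZMod.neg_one_pow_val_add {R : Type*} [Ring R] (x y : ZMod 2) :
    (-1 : R) ^ (x + y).val = (-1) ^ x.val * (-1) ^ y.val := by
  rw [ZMod.val_add, ← neg_one_pow_eq_pow_mod_two, pow_add]

theorem I_pow_val_natCast_add_two_mul (a b : ZMod 2) :
    I ^ ((a.val + 2 * b.val : ℕ) : ZMod 4).val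
      = (1 + I) / 2 * (-1) ^ b.val + (1 - I) / 2 * (-1) ^ (a + b).val := by
  have hval : ∀ x : ZMod 2, x.val = 0 ∨ x.val = 1 := by decide
  rw [ZMod.val_natCast, ZMod.neg_one_pow_val_add]
  rcases hval a with ha | ha <;> rcases hval b with hb | hb <;>
    simp [ha, hb, Complex.ext_iff, pow_succ] <;> norm_num

noncomputable def walsh {n : ℕ} (g : (Fin n → ZMod 2) → ZMod 2) (u : Fin n → ZMod 2) : ℝ :=
  ∑ x, (-1 : ℝ) ^ (g x + dotp u x).val

theorem IsBent.abs_walsh {n : ℕ} {g : (Fin n → ZMod 2) → ZMod 2} (hg : IsBent g)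
    (u : Fin n → ZMod 2) : |walsh g u| = √(2 ^ n) := by
  rw [← Real.norm_eq_abs, ← Complex.norm_real, walsh, ofReal_sum, ← hg u]
  push_cast
  rfl

theorem sum_I_pow_mul_chr {n : ℕ} {a0 a1 : (Fin n → ZMod 2) → ZMod 2}
    {f : (Fin n → ZMod 2) → ZMod 4} (hf : ∀ x, f x = (((a0 x).val + 2 * (a1 x).val : ℕ) : ZMod 4))
    (u : Fin n → ZMod 2) :
    ∑ x, I ^ (f x).val * chr u x
      = (1 + I) / 2 * walsh a1 u + (1 - I) / 2 * walsh (a0 + a1) u := by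
  simp only [walsh, ofReal_sum, mul_sum, ← sum_add_distrib]
  refine sum_congr rfl fun x _ => ?_
  rw [hf, chr, I_pow_val_natCast_add_two_mul, Pi.add_apply]
  push_cast
  simp only [ZMod.neg_one_pow_val_add]
  ring

theorem norm_one_add_I_div_two_mul_add {r s c : ℝ} (hr : |r| = c) (hs : |s| = c) :
    ‖(1 + I) / 2 * r + (1 - I) / 2 * s‖ = c := by
  have hc : 0 ≤ c := hr ▸ abs_nonneg r
  have hr2 : r ^ 2 = c ^ 2 := by rw [← sq_abs, hr]
  have hs2 : s ^ 2 = c ^ 2 := by rw [← sq_abs, hs]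
  have hnormSq : normSq ((1 + I) / 2 * r + (1 - I) / 2 * s) = (r ^ 2 + s ^ 2) / 2 := by
    simp only [normSq_apply, add_re, add_im, sub_re, sub_im, mul_re, mul_im, div_ofNat_re,
      div_ofNat_im, one_re, one_im, I_re, I_im, ofReal_re, ofReal_im]
    ring
  rw [norm_def, hnormSq, hr2, hs2, add_self_div_two, Real.sqrt_sq hc]

theorem bent_set_gbent_general (n : ℕ)
    (S : Set ((Fin n → ZMod 2) → ZMod 2))
    (hS : ∀ g ∈ S, IsBent g)
    (hSsum : ∀ g ∈ S, ∀ h ∈ S, g ≠ h → IsBent (g + h))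
    (a0 a1 : (Fin n → ZMod 2) → ZMod 2) (ha0 : a0 ∈ S) (ha1 : a1 ∈ S) (hne : a0 ≠ a1)
    (f : (Fin n → ZMod 2) → ZMod 4)
    (hf : ∀ x, f x = (((a0 x).val + 2 * (a1 x).val : ℕ) : ZMod 4)) :
    ∀ u : Fin n → ZMod 2,
      ‖∑ x, Complex.I ^ (f x).val * chr u x‖ = Real.sqrt (2 ^ n) := by
  intro u
  rw [sum_I_pow_mul_chr hf u]
  exact norm_one_add_I_div_two_mul_add ((hS a1 ha1).abs_walsh u)
    ((hSsum a0 ha0 a1 ha1 hne).abs_walsh u)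

/-- If `S` is a bent set and `a₀ ≠ a₁` are in `S`, then `f = a₀ + 2a₁` is gbent. -/
theorem bent_set_gbent (n : ℕ) (hn : Even n)
    (S : Set ((Fin n → ZMod 2) → ZMod 2))
    (hS : ∀ g ∈ S, IsBent g)
    (hSsum : ∀ g ∈ S, ∀ h ∈ S, g ≠ h → IsBent (g + h))
    (a0 a1 : (Fin n → ZMod 2) → ZMod 2) (ha0 : a0 ∈ S) (ha1 : a1 ∈ S) (hne : a0 ≠ a1)
    (f : (Fin n → ZMod 2) → ZMod 4)
    (hf : ∀ x, f x = (((a0 x).val + 2 * (a1 x).val : ℕ) : ZMod 4)) :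
    ∀ u : Fin n → ZMod 2,
      ‖∑ x, Complex.I ^ (f x).val * chr u x‖ = Real.sqrt (2 ^ n) :=
  bent_set_gbent_general n S hS hSsum a0 a1 ha0 ha1 hne f hf
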